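/- arXiv:1512.03049 — 3 statements merged into one kernel-verified Lean document; each statement's English description precedes it below -/
import Mathlib

section
/- For all indices i ≠ j in {1, 2, 3}, the intersection E_i ∩ E_j equals the set { P_{l,m} : l ∈ {0,1,2}, m ∈ {0,1,…,n−1} }. In particular all three pairwise intersections E_1 ∩ E_2, E_1 ∩ E_3, and E_2 ∩ E_3 coincide, so each intersection point lies on all three curves E_1, E_2, E_3. -/
open Complex

noncomputable def ρ : ℂ := Complex.exp (2 * Real.pi * Complex.I / 3)

noncomputable def a : ℂ := (1 - ρ) / 3

noncomputable def Δn (n : ℕ) : AddSubgroup ℂ := AddSubgroup.closure {(n : ℂ), 1 - ρ}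

noncomputable def Δ : AddSubgroup ℂ := AddSubgroup.closure {1, ρ}

abbrev G : Type := ℂ ⧸ Δ

abbrev Gn (n : ℕ) : Type := ℂ ⧸ Δn n

abbrev An (n : ℕ) : Type := G × Gn n

noncomputable def mkG : ℂ → G := QuotientAddGroup.mk

noncomputable def mkGn (n : ℕ) : ℂ → Gn n := QuotientAddGroup.mk

/-- The curve E₁ = {([z], [z]ₙ)}. -/
noncomputable def E1 (n : ℕ) : Set (An n) := {p | ∃ z : ℂ, p = (mkG z, mkGn n z)}

/-- The curve E₂ = {([ρz − a], [z]ₙ)}. -/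
noncomputable def E2 (n : ℕ) : Set (An n) := {p | ∃ z : ℂ, p = (mkG (ρ * z - a), mkGn n z)}

/-- The curve E₃ = {([ρ²z − 2a], [z]ₙ)}. -/
noncomputable def E3 (n : ℕ) : Set (An n) := {p | ∃ z : ℂ, p = (mkG (ρ ^ 2 * z - 2 * a), mkGn n z)}

/-- The point P_{l,m} = ([2/3 + l·a], [2/3 + l·a + m]ₙ). -/
noncomputable def P (n : ℕ) (l : Fin 3) (m : Fin n) : An n :=
  (mkG (2 / 3 + (l.val : ℂ) * a), mkGn n (2 / 3 + (l.val : ℂ) * a + (m.val : ℂ)))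

lemma hρ3 : ρ ^ 3 = 1 := by
  rw [ρ, ← Complex.exp_nat_mul]
  rw [show (3:ℕ) * (2 * (Real.pi:ℂ) * Complex.I / 3) = 2 * Real.pi * Complex.I by push_cast; ring]
  exact Complex.exp_two_pi_mul_I

lemma hρ1 : ρ ≠ 1 := by
  intro h
  rw [ρ, Complex.exp_eq_one_iff] at h
  obtain ⟨k, hk⟩ := h
  have h2 : (2 * (Real.pi:ℂ) * Complex.I : ℂ) ≠ 0 := by
    simp [Real.pi_ne_zero, Complex.I_ne_zero, Complex.ofReal_ne_zero]
  have h3 : ((3 * k - 1 : ℤ) : ℂ) * (2 * (Real.pi:ℂ) * Complex.I) = 0 := by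
    push_cast; linear_combination (-3:ℂ) * hk
  rcases mul_eq_zero.mp h3 with h4 | h4
  · have : (3 * k - 1 : ℤ) = 0 := by exact_mod_cast h4
    omega
  · exact h2 h4

lemma hρsum : ρ ^ 2 + ρ + 1 = 0 := by
  rcases mul_eq_zero.mp (show (ρ - 1) * (ρ ^ 2 + ρ + 1) = 0 by linear_combination hρ3) with h' | h'
  · exact absurd h' (sub_ne_zero.mpr hρ1)
  · exact h'

lemma hρ0 : ρ ≠ 0 := fun h => by simpa [h] using hρ3

lemma hρm1 : 1 + ρ ≠ 0 := by
  intro h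
  have h2 := hρsum
  rw [show ρ = -1 by linear_combination h] at h2
  norm_num at h2

lemma h1mρ : 1 - ρ ≠ 0 := sub_ne_zero.mpr (Ne.symm hρ1)

lemma ha : a = (1 - ρ)/3 := rfl

lemma mem_Δ (p q : ℤ) : (p:ℂ) + q*ρ ∈ Δ := by
  rw [Δ, AddSubgroup.mem_closure_pair]
  exact ⟨p, q, by simp [zsmul_eq_mul]⟩

lemma Δ_elim {z : ℂ} (h : z ∈ Δ) : ∃ p q : ℤ, z = p + q*ρ := by
  rw [Δ, AddSubgroup.mem_closure_pair] at h
  obtain ⟨p, q, hpq⟩ := h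
  exact ⟨p, q, by rw [← hpq]; simp [zsmul_eq_mul]⟩

lemma mem_Δn (n : ℕ) (p q : ℤ) : (p:ℂ)*n + q*(1-ρ) ∈ Δn n := by
  rw [Δn, AddSubgroup.mem_closure_pair]
  exact ⟨p, q, by simp [zsmul_eq_mul]⟩

lemma Δn_elim {n : ℕ} {z : ℂ} (h : z ∈ Δn n) : ∃ p q : ℤ, z = p*n + q*(1-ρ) := by
  rw [Δn, AddSubgroup.mem_closure_pair] at h
  obtain ⟨p, q, hpq⟩ := h
  exact ⟨p, q, by rw [← hpq]; simp [zsmul_eq_mul]⟩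

lemma mkG_eq_iff {x y : ℂ} : mkG x = mkG y ↔ x - y ∈ Δ := QuotientAddGroup.eq_iff_sub_mem

lemma mkGn_eq_iff {n : ℕ} {x y : ℂ} : mkGn n x = mkGn n y ↔ x - y ∈ Δn n :=
  QuotientAddGroup.eq_iff_sub_mem

/-- Solutions of `(1-ρ)z + a ∈ Δ` in standard form. -/
lemma reduce {z : ℂ} {s t : ℤ} (h : (1-ρ)*z + a = (s:ℂ) + t*ρ) :
    ∃ (l : ℕ), l < 3 ∧ ∃ p q : ℤ, z = 2/3 + (l:ℂ)*a + ((p:ℂ) + q*ρ) := by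
  set L : ℤ := (-(s+t)) % 3 with hL
  have hL0 : 0 ≤ L := by omega
  have hL3 : L < 3 := by omega
  obtain ⟨k, hk⟩ : ∃ k : ℤ, s + t + L = 3*k := ⟨(s+t+L)/3, by omega⟩
  refine ⟨L.toNat, by omega, s - k - 1, k, ?_⟩
  have hLc : ((L.toNat : ℕ) : ℂ) = 3*(k:ℂ) - s - t := by
    have h5 : (L.toNat : ℤ) = 3*k - s - t := by omega
    exact_mod_cast congrArg (Int.cast : ℤ → ℂ) h5
  rw [ha] at h ⊢
  apply mul_left_cancel₀ h1mρ
  rw [hLc]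
  push_cast
  linear_combination h + ((s:ℂ)+t)/3 * hρsum

lemma dF1 (l : ℂ) (p q : ℤ) (w : ℂ) (hw : w = 2/3 + l*a + ((p:ℂ) + q*ρ)) :
    mkG w = mkG (2/3 + l*a) := by
  rw [mkG_eq_iff]
  have h : w - (2/3 + l*a) = (p:ℂ) + q*ρ := by rw [hw]; ring
  rw [h]; exact mem_Δ p q

lemma dF2 (l : ℕ) (p q : ℤ) (w : ℂ) (hw : w = 2/3 + (l:ℂ)*a + ((p:ℂ) + q*ρ)) :
    mkG (ρ * w - a) = mkG (2/3 + (l:ℂ)*a) := by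
  rw [mkG_eq_iff]
  have h : (ρ * w - a) - (2/3 + (l:ℂ)*a) = ((-1-q : ℤ):ℂ) + ((1+l+p-q : ℤ):ℂ)*ρ := by
    rw [hw]
    push_cast
    rw [ha]
    linear_combination (-(l:ℂ)/3 + q) * hρsum
  rw [h]; exact mem_Δ _ _

lemma dF3 (l : ℕ) (p q : ℤ) (w : ℂ) (hw : w = 2/3 + (l:ℂ)*a + ((p:ℂ) + q*ρ)) :
    mkG (ρ^2 * w - 2*a) = mkG (2/3 + (l:ℂ)*a) := by
  rw [mkG_eq_iff]
  have h : (ρ^2 * w - 2*a) - (2/3 + (l:ℂ)*a) = ((-2-l-p+q : ℤ):ℂ) + ((-p : ℤ):ℂ)*ρ := by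
    rw [hw]
    push_cast
    rw [ha]
    linear_combination (2/3 + (l:ℂ)*2/3 + p - ρ*(l:ℂ)/3 + q*ρ - q) * hρsum
  rw [h]; exact mem_Δ _ _

lemma dGn (n : ℕ) (l : ℂ) (p q M u : ℤ) (h : p + q - M = u * (n:ℤ)) (w y : ℂ)
    (hw : w = 2/3 + l*a + ((p:ℂ) + q*ρ)) (hy : y = 2/3 + l*a + (M:ℂ)) :
    mkGn n w = mkGn n y := by
  rw [mkGn_eq_iff]
  have hc : (p:ℂ) + q - M = (u:ℂ)*(n:ℂ) := by exact_mod_cast congrArg (Int.cast : ℤ → ℂ) h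
  have h2 : w - y = (u:ℂ)*(n:ℕ) + ((-q : ℤ):ℂ)*(1-ρ) := by
    rw [hw, hy]; push_cast at hc ⊢; linear_combination hc
  rw [h2]; exact mem_Δn n u (-q)

/-- Assemble a point in standard form into some `P n L m`. -/
lemma toP (n : ℕ) (hn : 0 < n) (l : ℕ) (hl : l < 3) (p q : ℤ) (g : G) (w : ℂ)
    (hg : g = mkG (2/3 + (l:ℂ)*a)) (hw : w = 2/3 + (l:ℂ)*a + ((p:ℂ) + q*ρ)) :
    ∃ (L : Fin 3) (m : Fin n), (g, mkGn n w) = P n L m := by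
  have hn' : (0:ℤ) < (n:ℤ) := by exact_mod_cast hn
  set M : ℤ := (p+q) % (n:ℤ) with hM
  have hM0 : 0 ≤ M := Int.emod_nonneg _ hn'.ne'
  have hMn : M < (n:ℤ) := Int.emod_lt_of_pos _ hn'
  have hdiv := Int.mul_ediv_add_emod (p+q) (n:ℤ)
  refine ⟨⟨l, hl⟩, ⟨M.toNat, by omega⟩, ?_⟩
  have hMt : ((M.toNat : ℕ) : ℂ) = (M : ℂ) := by
    have : ((M.toNat : ℕ) : ℤ) = M := Int.toNat_of_nonneg hM0
    exact_mod_cast congrArg (Int.cast : ℤ → ℂ) this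
  simp only [P, Prod.mk.injEq]
  constructor
  · exact hg
  · refine dGn n ((l:ℂ)) p q M ((p+q)/(n:ℤ)) (by linear_combination -hdiv - hM) w _ hw ?_
    rw [hMt]

/-- Pair (1,2): extract standard form. -/
lemma key12 {n : ℕ} {z w : ℂ} (h1 : z - (ρ*w - a) ∈ Δ) (h2 : z - w ∈ Δn n) :
    ∃ (l : ℕ), l < 3 ∧ ∃ p q : ℤ, z = 2/3 + (l:ℂ)*a + ((p:ℂ) + q*ρ) := by
  obtain ⟨s₀, t₀, hst⟩ := Δ_elim h1
  obtain ⟨u, v, huv⟩ := Δn_elim h2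
  refine reduce (s := s₀ - v) (t := t₀ - u*(n:ℤ) - 2*v) ?_
  push_cast
  linear_combination hst - ρ*huv + (v:ℂ)*hρsum

/-- Pair (1,3): extract standard form. -/
lemma key13 {n : ℕ} {z w : ℂ} (h1 : z - (ρ^2*w - 2*a) ∈ Δ) (h2 : z - w ∈ Δn n) :
    ∃ (l : ℕ), l < 3 ∧ ∃ p q : ℤ, z = 2/3 + (l:ℂ)*a + ((p:ℂ) + q*ρ) := by
  obtain ⟨s₀, t₀, hst⟩ := Δ_elim h1
  obtain ⟨u, v, huv⟩ := Δn_elim h2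
  refine reduce (s := t₀ + u*(n:ℤ) + v + 1) (t := t₀ - s₀ + 1 - v) ?_
  rw [ha] at hst ⊢
  apply mul_left_cancel₀ hρm1
  push_cast
  linear_combination hst - ρ^2*huv + ((s₀:ℂ) - t₀ - u*(n:ℕ) + v*(ρ-1) - 4/3)*hρsum

/-- Pair (2,3): extract standard form. -/
lemma key23 {n : ℕ} {z w : ℂ} (h1 : (ρ*z - a) - (ρ^2*w - 2*a) ∈ Δ) (h2 : z - w ∈ Δn n) :
    ∃ (l : ℕ), l < 3 ∧ ∃ p q : ℤ, z = 2/3 + (l:ℂ)*a + ((p:ℂ) + q*ρ) := by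
  obtain ⟨s₀, t₀, hst⟩ := Δ_elim h1
  obtain ⟨u, v, huv⟩ := Δn_elim h2
  refine reduce (s := t₀ - s₀ - v + 1) (t := -(s₀ + u*(n:ℤ) + 2*v)) ?_
  rw [ha] at hst ⊢
  apply mul_left_cancel₀ hρ0
  push_cast
  linear_combination hst - ρ^2*huv + ((s₀:ℂ) + v*ρ - 1/3)*hρsum

/-- For all `i ≠ j`, the intersection `E_i ∩ E_j` equals `{P_{l,m}}`; in particular all
three pairwise intersections coincide. -/
theorem stmt8 (n : ℕ) (hn : 0 < n) :
    E1 n ∩ E2 n = {p | ∃ (l : Fin 3) (m : Fin n), p = P n l m} ∧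
    E1 n ∩ E3 n = {p | ∃ (l : Fin 3) (m : Fin n), p = P n l m} ∧
    E2 n ∩ E3 n = {p | ∃ (l : Fin 3) (m : Fin n), p = P n l m} := by
  refine ⟨?_, ?_, ?_⟩
  · ext pt
    simp only [Set.mem_inter_iff, E1, E2, Set.mem_setOf_eq]
    constructor
    · rintro ⟨⟨z, rfl⟩, w, hw⟩
      rw [Prod.mk.injEq] at hw
      obtain ⟨hwa, hwb⟩ := hw
      obtain ⟨l, hl, p, q, hz⟩ := key12 (n := n) (mkG_eq_iff.mp hwa) (mkGn_eq_iff.mp hwb)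
      obtain ⟨L, m, hPm⟩ := toP n hn l hl p q (mkG z) z (dF1 _ p q z hz) hz
      exact ⟨L, m, hPm⟩
    · rintro ⟨L, m, rfl⟩
      constructor
      · refine ⟨2/3 + (L.val:ℂ)*a + (m.val:ℂ), ?_⟩
        simp only [P, Prod.mk.injEq]
        exact ⟨(dF1 _ (m.val:ℤ) 0 _ (by push_cast; ring)).symm, trivial⟩
      · refine ⟨2/3 + (L.val:ℂ)*a + (m.val:ℂ), ?_⟩
        simp only [P, Prod.mk.injEq]
        exact ⟨(dF2 L.val (m.val:ℤ) 0 _ (by push_cast; ring)).symm, trivial⟩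
  · ext pt
    simp only [Set.mem_inter_iff, E1, E3, Set.mem_setOf_eq]
    constructor
    · rintro ⟨⟨z, rfl⟩, w, hw⟩
      rw [Prod.mk.injEq] at hw
      obtain ⟨hwa, hwb⟩ := hw
      obtain ⟨l, hl, p, q, hz⟩ := key13 (n := n) (mkG_eq_iff.mp hwa) (mkGn_eq_iff.mp hwb)
      obtain ⟨L, m, hPm⟩ := toP n hn l hl p q (mkG z) z (dF1 _ p q z hz) hz
      exact ⟨L, m, hPm⟩
    · rintro ⟨L, m, rfl⟩
      constructor
      · refine ⟨2/3 + (L.val:ℂ)*a + (m.val:ℂ), ?_⟩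
        simp only [P, Prod.mk.injEq]
        exact ⟨(dF1 _ (m.val:ℤ) 0 _ (by push_cast; ring)).symm, trivial⟩
      · refine ⟨2/3 + (L.val:ℂ)*a + (m.val:ℂ), ?_⟩
        simp only [P, Prod.mk.injEq]
        exact ⟨(dF3 L.val (m.val:ℤ) 0 _ (by push_cast; ring)).symm, trivial⟩
  · ext pt
    simp only [Set.mem_inter_iff, E2, E3, Set.mem_setOf_eq]
    constructor
    · rintro ⟨⟨z, rfl⟩, w, hw⟩
      rw [Prod.mk.injEq] at hw
      obtain ⟨hwa, hwb⟩ := hw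
      obtain ⟨l, hl, p, q, hz⟩ := key23 (n := n) (mkG_eq_iff.mp hwa) (mkGn_eq_iff.mp hwb)
      obtain ⟨L, m, hPm⟩ := toP n hn l hl p q (mkG (ρ*z - a)) z (dF2 l p q z hz) hz
      exact ⟨L, m, hPm⟩
    · rintro ⟨L, m, rfl⟩
      constructor
      · refine ⟨2/3 + (L.val:ℂ)*a + (m.val:ℂ), ?_⟩
        simp only [P, Prod.mk.injEq]
        exact ⟨(dF2 L.val (m.val:ℤ) 0 _ (by push_cast; ring)).symm, trivial⟩
      · refine ⟨2/3 + (L.val:ℂ)*a + (m.val:ℂ), ?_⟩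
        simp only [P, Prod.mk.injEq]
        exact ⟨(dF3 L.val (m.val:ℤ) 0 _ (by push_cast; ring)).symm, trivial⟩
end

section
/- The map G_n → A_n sending [z]_n to ([z], [z]_n) is a well-defined injective group homomorphism whose image is E_1. Similarly, the maps sending [z]_n to ([ρz], [z]_n) and to ([ρ²z], [z]_n) are well-defined injective group homomorphisms, and E_2 and E_3 are, respectively, the translates of their images by the elements ([−a], 0) and ([−2a], 0) of A_n. In particular each E_i is a coset of a subgroup of A_n isomorphic to G_n. -/
open Complex

/-!
Since `Δₙ ⊆ Δ` and `Δ = ℤ[ρ]` is stable under multiplication by `ρ`, the map `z ↦ ρᵏ z`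
descends to `Gₙ → G`; paired with the identity of `Gₙ` it gives a homomorphism `Gₙ → Aₙ`,
injective because its second coordinate is. As `[ρᵏ z − b] = [−b] + [ρᵏ z]`, the sets `E₂`, `E₃`
are translates of its images.
-/

lemma isPrimitiveRoot_rho : IsPrimitiveRoot ρ 3 := by
  simpa [ρ] using Complex.isPrimitiveRoot_exp 3 (by norm_num)

lemma rho_sq : ρ ^ 2 = -1 - ρ := by
  have h := isPrimitiveRoot_rho.geom_sum_eq_zero (by norm_num)
  simp only [Finset.sum_range_succ, Finset.sum_range_zero] at h
  linear_combination h

lemma one_mem_Δ : (1 : ℂ) ∈ Δ := AddSubgroup.subset_closure (by simp)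

lemma rho_mem_Δ : ρ ∈ Δ := AddSubgroup.subset_closure (by simp)

lemma Δn_le_Δ (n : ℕ) : Δn n ≤ Δ := by
  rw [Δn, AddSubgroup.closure_le]
  rintro x (rfl | rfl)
  · simpa using AddSubgroup.nsmul_mem Δ one_mem_Δ n
  · exact Δ.sub_mem one_mem_Δ rho_mem_Δ

lemma Δ_le_comap_mulLeft_rho : Δ ≤ Δ.comap (AddMonoidHom.mulLeft ρ) := by
  refine (AddSubgroup.closure_le _).2 ?_
  rintro x (rfl | rfl)
  · simpa using rho_mem_Δ
  · have : ρ * ρ = -1 - ρ := by rw [← sq, rho_sq]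
    simpa [this] using Δ.sub_mem (Δ.neg_mem one_mem_Δ) rho_mem_Δ

lemma Δ_le_comap_mulLeft_rho_pow (k : ℕ) : Δ ≤ Δ.comap (AddMonoidHom.mulLeft (ρ ^ k)) := by
  induction k with
  | zero => intro x hx; simpa using hx
  | succ k ih =>
    intro x hx
    have : ρ ^ (k + 1) * x = ρ * (ρ ^ k * x) := by ring
    simpa [this] using Δ_le_comap_mulLeft_rho (ih hx)

noncomputable def rhoPowGraphHom (n k : ℕ) : Gn n →+ An n :=
  (QuotientAddGroup.map (Δn n) Δ (AddMonoidHom.mulLeft (ρ ^ k))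
    ((Δn_le_Δ n).trans (Δ_le_comap_mulLeft_rho_pow k))).prod (AddMonoidHom.id (Gn n))

lemma rhoPowGraphHom_mk (n k : ℕ) (z : ℂ) : rhoPowGraphHom n k (mkGn n z) = (mkG (ρ ^ k * z), mkGn n z) := rfl

lemma rhoPowGraphHom_injective (n k : ℕ) : Function.Injective (rhoPowGraphHom n k) :=
  fun _ _ h => congrArg Prod.snd h

lemma range_rhoPowGraphHom (n k : ℕ) :
    Set.range (rhoPowGraphHom n k) = {p | ∃ z : ℂ, p = (mkG (ρ ^ k * z), mkGn n z)} := by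
  ext p
  constructor
  · rintro ⟨x, rfl⟩
    obtain ⟨z, rfl⟩ := QuotientAddGroup.mk_surjective x
    exact ⟨z, rhoPowGraphHom_mk n k z⟩
  · rintro ⟨z, rfl⟩
    exact ⟨mkGn n z, rhoPowGraphHom_mk n k z⟩

lemma image_add_range_rhoPowGraphHom (n k : ℕ) (b : ℂ) :
    (fun x => ((mkG (-b), 0) : An n) + x) '' Set.range (rhoPowGraphHom n k) =
      {p | ∃ z : ℂ, p = (mkG (ρ ^ k * z - b), mkGn n z)} := by
  have translate (z : ℂ) :
      ((mkG (-b), 0) : An n) + (mkG (ρ ^ k * z), mkGn n z) = (mkG (ρ ^ k * z - b), mkGn n z) := by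
    ext
    · show mkG (-b + ρ ^ k * z) = mkG (ρ ^ k * z - b)
      rw [neg_add_eq_sub]
    · exact zero_add _
  rw [range_rhoPowGraphHom]
  ext p
  constructor
  · rintro ⟨q, ⟨z, rfl⟩, rfl⟩
    exact ⟨z, translate z⟩
  · rintro ⟨z, rfl⟩
    exact ⟨_, ⟨z, rfl⟩, translate z⟩

theorem stmt14_general (n : ℕ) :
    (∃ f : Gn n →+ An n, Function.Injective f ∧
      (∀ z : ℂ, f (mkGn n z) = (mkG z, mkGn n z)) ∧ Set.range f = E1 n) ∧
    (∃ f : Gn n →+ An n, Function.Injective f ∧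
      (∀ z : ℂ, f (mkGn n z) = (mkG (ρ * z), mkGn n z)) ∧
      E2 n = (fun x => ((mkG (-a), 0) : An n) + x) '' Set.range f) ∧
    (∃ f : Gn n →+ An n, Function.Injective f ∧
      (∀ z : ℂ, f (mkGn n z) = (mkG (ρ ^ 2 * z), mkGn n z)) ∧
      E3 n = (fun x => ((mkG (-(2 * a)), 0) : An n) + x) '' Set.range f) := by
  refine ⟨⟨rhoPowGraphHom n 0, rhoPowGraphHom_injective n 0, fun z => by simp [rhoPowGraphHom_mk], ?_⟩,
    ⟨rhoPowGraphHom n 1, rhoPowGraphHom_injective n 1, fun z => by simp [rhoPowGraphHom_mk], ?_⟩,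
    ⟨rhoPowGraphHom n 2, rhoPowGraphHom_injective n 2, rhoPowGraphHom_mk n 2, ?_⟩⟩
  · simp only [range_rhoPowGraphHom, pow_zero, one_mul]
    rfl
  · rw [image_add_range_rhoPowGraphHom, pow_one]
    rfl
  · rw [image_add_range_rhoPowGraphHom]
    rfl

/-- The maps `[z]ₙ ↦ ([ρᶦz], [z]ₙ)` (`i = 0, 1, 2`) are well-defined injective group
homomorphisms `Gₙ → Aₙ`; the image of the first is `E₁`, and `E₂`, `E₃` are the
translates of the images of the other two by `([−a], 0)` and `([−2a], 0)`.  In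
particular each `Eᵢ` is a coset of a subgroup of `Aₙ` isomorphic to `Gₙ`. -/
theorem stmt14 (n : ℕ) (hn : 0 < n) :
    (∃ f : Gn n →+ An n, Function.Injective f ∧
      (∀ z : ℂ, f (mkGn n z) = (mkG z, mkGn n z)) ∧ Set.range f = E1 n) ∧
    (∃ f : Gn n →+ An n, Function.Injective f ∧
      (∀ z : ℂ, f (mkGn n z) = (mkG (ρ * z), mkGn n z)) ∧
      E2 n = (fun x => ((mkG (-a), 0) : An n) + x) '' Set.range f) ∧
    (∃ f : Gn n →+ An n, Function.Injective f ∧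
      (∀ z : ℂ, f (mkGn n z) = (mkG (ρ ^ 2 * z), mkGn n z)) ∧
      E3 n = (fun x => ((mkG (-(2 * a)), 0) : An n) + x) '' Set.range f) :=
  stmt14_general n
end

section
/- Let G be a finitely generated group and ψ : G → ℤ × ℤ a surjective group homomorphism whose kernel K is finitely generated. Assume that the abelianization of G has free rank two, i.e., the ℚ-vector space obtained by tensoring the abelianization of G with ℚ is two-dimensional. Then the commutator subgroup [G, G] has finite index in K, and in particular [G, G] is finitely generated. -/
/-!
The map `Gᵃᵇ → ℤ × ℤ` induced by `ψ` is a surjection between abelian groups of the same rank, so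
its kernel is a finitely generated torsion group, hence finite. That kernel is the image of
`ker ψ` in `Gᵃᵇ`, i.e. `ker ψ / [G, G]`. Schreier's lemma then makes `[G, G]` finitely generated.
-/

open TensorProduct Module

theorem Module.isTorsion_ker_of_surjective_of_finrank_eq {R M N : Type*} [CommRing R]
    [IsDomain R] [IsNoetherianRing R] [AddCommGroup M] [Module R M] [Module.Finite R M]
    [AddCommGroup N] [Module R N] {g : M →ₗ[R] N} (hg : Function.Surjective g)
    (h : finrank R N = finrank R M) :
    IsTorsion R (LinearMap.ker g) := by
  have hsum := (LinearMap.ker g).finrank_quotient_add_finrank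
  rw [(g.quotKerEquivOfSurjective hg).finrank_eq, h] at hsum
  exact finrank_eq_zero_iff_isTorsion.mp (by omega)

theorem AddMonoidHom.finite_ker_of_surjective_of_finrank_eq {M N : Type*} [AddCommGroup M]
    [AddGroup.FG M] [AddCommGroup N] {g : M →+ N} (hg : Function.Surjective g)
    (h : finrank ℤ N = finrank ℤ M) : Finite g.ker :=
  have : Module.Finite ℤ M := Module.Finite.iff_addGroup_fg.mpr ‹_›
  finite_of_fg_torsion (LinearMap.ker g.toIntLinearMap)
    (isTorsion_ker_of_surjective_of_finrank_eq (g := g.toIntLinearMap) hg h)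

theorem Abelianization.relIndex_commutator_ker {G A : Type*} [Group G] [CommGroup A]
    (ψ : G →* A) : (commutator G).relIndex ψ.ker = Nat.card (lift ψ).ker := by
  have hψ : ψ.ker = (lift ψ).ker.comap of := MonoidHom.comap_ker (lift ψ) of
  rw [← ker_of, Subgroup.relIndex_ker, hψ,
    Subgroup.map_comap_eq_self_of_surjective QuotientGroup.mk_surjective]

theorem Subgroup.fg_of_relIndex_ne_zero {G : Type*} [Group G] {H K : Subgroup G} (hHK : H ≤ K)
    [Group.FG K] (h : H.relIndex K ≠ 0) : Group.FG H :=
  have : (H.subgroupOf K).FiniteIndex := ⟨h⟩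
  Group.fg_of_surjective (f := (subgroupOfEquivOfLe hHK).toMonoidHom)
    (subgroupOfEquivOfLe hHK).surjective

/-- If `G` is a finitely generated group, `ψ : G → ℤ × ℤ` is a surjective homomorphism
with finitely generated kernel, and the abelianization of `G` has free rank two, then
the commutator subgroup `[G, G]` has finite index in `ker ψ`; in particular `[G, G]`
is finitely generated. -/
theorem stmt15 (G : Type*) [Group G] (hG : Group.FG G)
    (ψ : G →* Multiplicative (ℤ × ℤ)) (hsurj : Function.Surjective ψ)
    (hker : Group.FG ↥ψ.ker)
    (hrank : Module.finrank ℚ (ℚ ⊗[ℤ] (Additive (Abelianization G))) = 2) :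
    (commutator G).relIndex ψ.ker ≠ 0 ∧ Group.FG ↥(commutator G) := by
  have : Group.FG (Abelianization G) :=
    Group.fg_of_surjective (f := Abelianization.of) QuotientGroup.mk_surjective
  let g := (Abelianization.lift ψ).toAdditiveLeft
  have hg : Function.Surjective g := fun y ↦
    let ⟨x, hx⟩ := hsurj (.ofAdd y)
    ⟨.ofMul (Abelianization.of x), hx⟩
  have hrank_eq : finrank ℤ (ℤ × ℤ) = finrank ℤ (Additive (Abelianization G)) := by
    rw [← (isBaseChange ℤ (Additive (Abelianization G)) ℚ).finrank_eq, hrank, finrank_prod,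
      finrank_self]
  have hfin : Finite g.ker := g.finite_ker_of_surjective_of_finrank_eq hg hrank_eq
  have hidx : (commutator G).relIndex ψ.ker ≠ 0 := by
    rw [Abelianization.relIndex_commutator_ker]
    exact Nat.card_ne_zero.mpr ⟨inferInstance, hfin⟩
  exact ⟨hidx, Subgroup.fg_of_relIndex_ne_zero (Abelianization.commutator_subset_ker ψ) hidx⟩
end
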